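/- Let P and Q be monotone predicates on subsets of a finite set F with P(Z) ↔ ¬Q(F \ Z) for all Z, P(∅) = Q(∅) = false, and P(F) = Q(F) = true. Then a feature i ∈ F is contained in some subset-minimal set satisfying P if and only if i is contained in some subset-minimal set satisfying Q. -/
import Mathlib

private lemma exists_minimal_subset {F : Type} [DecidableEq F] [Fintype F]
    (Q : Finset F → Prop) :
    ∀ S : Finset F, Q S → ∃ Y, Y ⊆ S ∧ Q Y ∧ ∀ Y' ⊂ Y, ¬ Q Y' := by
  classical
  intro S
  induction S using Finset.strongInduction with
  | _ S ih =>
    intro hS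
    by_cases h : ∀ Y' ⊂ S, ¬ Q Y'
    · exact ⟨S, subset_rfl, hS, h⟩
    · push_neg at h
      obtain ⟨T, hTS, hQT⟩ := h
      obtain ⟨Y, hYT, hQY, hmin⟩ := ih T hTS hQT
      exact ⟨Y, hYT.trans hTS.subset, hQY, hmin⟩

private lemma axp_to_cxp {F : Type} [DecidableEq F] [Fintype F]
    (P Q : Finset F → Prop)
    (hdual : ∀ Z : Finset F, P Z ↔ ¬ Q (Finset.univ \ Z))
    (hQmono : ∀ ⦃Z Z' : Finset F⦄, Z ⊆ Z' → Q Z → Q Z')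
    (i : F) :
    (∃ X : Finset F, (P X ∧ ∀ X' ⊂ X, ¬ P X') ∧ i ∈ X) →
      (∃ Y : Finset F, (Q Y ∧ ∀ Y' ⊂ Y, ¬ Q Y') ∧ i ∈ Y) := by
  classical
  rintro ⟨X, ⟨hPX, hmin⟩, hi⟩
  have hne : ¬ P (X.erase i) := hmin _ (Finset.erase_ssubset hi)
  have hQ' : Q (Finset.univ \ X.erase i) := by
    by_contra h
    exact hne ((hdual _).mpr h)
  have hQX : ¬ Q (Finset.univ \ X) := (hdual X).mp hPX
  obtain ⟨Y, hYsub, hQY, hYmin⟩ := exists_minimal_subset Q _ hQ'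
  refine ⟨Y, ⟨hQY, hYmin⟩, ?_⟩
  by_contra hiY
  apply hQX
  apply hQmono (Z := Y) _ hQY
  intro x hx
  have hx' := hYsub hx
  simp only [Finset.mem_sdiff, Finset.mem_univ, true_and, Finset.mem_erase] at hx' ⊢
  intro hxX
  exact hx' ⟨fun he => hiY (he ▸ hx), hxX⟩

/-- Duality consequence: a feature occurs in some subset-minimal set satisfying
P (an AXp) iff it occurs in some subset-minimal set satisfying Q (a CXp). -/
theorem feature_in_axp_iff_in_cxp {F : Type} [DecidableEq F] [Fintype F]
    (P Q : Finset F → Prop)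
    (hdual : ∀ Z : Finset F, P Z ↔ ¬ Q (Finset.univ \ Z))
    (hPmono : ∀ ⦃Z Z' : Finset F⦄, Z ⊆ Z' → P Z → P Z')
    (hQmono : ∀ ⦃Z Z' : Finset F⦄, Z ⊆ Z' → Q Z → Q Z')
    (hP0 : ¬ P ∅) (hPF : P Finset.univ) (hQ0 : ¬ Q ∅) (hQF : Q Finset.univ)
    (i : F) :
    (∃ X : Finset F, (P X ∧ ∀ X' ⊂ X, ¬ P X') ∧ i ∈ X) ↔
      (∃ Y : Finset F, (Q Y ∧ ∀ Y' ⊂ Y, ¬ Q Y') ∧ i ∈ Y) := by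
  classical
  have hdual' : ∀ Z : Finset F, Q Z ↔ ¬ P (Finset.univ \ Z) := by
    intro Z
    have := hdual (Finset.univ \ Z)
    rw [Finset.sdiff_sdiff_self_left, Finset.univ_inter] at this
    tauto
  exact ⟨axp_to_cxp P Q hdual hQmono i, axp_to_cxp Q P hdual' hPmono i⟩
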